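/- For two opposite strong opinions performing their joint dynamics X on a connected graph G on N vertices, the meeting time satisfies M_X(G) = max_{x,y} M_X(x,y) < 4·H_{P^B}(G), where H_{P^B}(G) is the maximum hitting time of the biased random walk. -/

import Mathlib

open Finset

/-- Transition matrix of the biased random walk `X_B` on a graph `G` on `N` vertices:
`P^B_{ij} = (1/N)(1/|N_i| + 1/|N_j|)` for edges, `P^B_{ii} = 1 - Σ_{k ∈ N_i} P^B_{ik}`,
and `0` otherwise. -/
noncomputable def PB (N : ℕ) (G : SimpleGraph (Fin N)) [DecidableRel G.Adj] (i j : Fin N) : ℝ :=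
  if G.Adj i j then (1 / (N : ℝ)) * (1 / (G.degree i : ℝ) + 1 / (G.degree j : ℝ))
  else if i = j then
    1 - ∑ k ∈ G.neighborFinset i,
      (1 / (N : ℝ)) * (1 / (G.degree i : ℝ) + 1 / (G.degree k : ℝ))
  else 0

/-- `H` is the vector of expected hitting times of the Markov chain with transition
matrix `P^B` on the vertices of `G`: `H i j` is the expected number of steps a walk
started at `i` takes to first reach `j`, characterized by the first-step equations. -/
def IsHittingTime (N : ℕ) (G : SimpleGraph (Fin N)) [DecidableRel G.Adj]
    (H : Fin N → Fin N → ℝ) : Prop :=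
  (∀ y, H y y = 0) ∧
  ∀ x y, x ≠ y → H x y = 1 + ∑ k : Fin N, PB N G x k * H k y

/-- Total probability that the biased walk at `x` moves (to some neighbor). -/
noncomputable def PBsum (N : ℕ) (G : SimpleGraph (Fin N)) [DecidableRel G.Adj]
    (x : Fin N) : ℝ :=
  ∑ i ∈ G.neighborFinset x, PB N G x i

/-- `M` is the vector of expected meeting times of the joint process `X` of two opposite
strong opinions at `x` and `y`: if `x ∉ N_y`, exactly one walker moves at a time (each
single move having probability `P^B`), and both stay with probability
`1 - Σ_{i∈N_x}P^B_{xi} - Σ_{j∈N_y}P^B_{yj}`; if `x ∈ N_y`, additionally the walkers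
swap positions through the common edge (which counts as meeting) with probability
`P^B_{xy}`, and both stay with probability
`1 - Σ_{i∈N_x}P^B_{xi} - Σ_{j∈N_y}P^B_{yj} + P^B_{xy}`. -/
def IsMeetingTimeX (N : ℕ) (G : SimpleGraph (Fin N)) [DecidableRel G.Adj]
    (M : Fin N → Fin N → ℝ) : Prop :=
  (∀ x, M x x = 0) ∧
  (∀ x y, x ≠ y → ¬ G.Adj x y →
    M x y = 1 + (∑ i ∈ G.neighborFinset x, PB N G x i * M i y)
      + (∑ j ∈ G.neighborFinset y, PB N G y j * M x j)
      + (1 - PBsum N G x - PBsum N G y) * M x y) ∧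
  (∀ x y, G.Adj x y →
    M x y = 1 + (∑ i ∈ (G.neighborFinset x).erase y, PB N G x i * M i y)
      + (∑ j ∈ (G.neighborFinset y).erase x, PB N G y j * M x j)
      + (1 - PBsum N G x - PBsum N G y + PB N G x y) * M x y)

/-- `M` is the vector of expected meeting times of the coupled process `X'` of two
walkers at `x` and `y`: exactly one walker moves at a time (each single move having
probability `P^B`); if `x ∈ N_y` the walkers meet (at `x` or at `y`) with probability
`2·P^B_{xy}`; both walkers stay with probability
`1 - Σ_{i∈N_x}P^B_{xi} - Σ_{j∈N_y}P^B_{yj}`. -/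
def IsMeetingTimeX' (N : ℕ) (G : SimpleGraph (Fin N)) [DecidableRel G.Adj]
    (M : Fin N → Fin N → ℝ) : Prop :=
  (∀ x, M x x = 0) ∧
  (∀ x y, x ≠ y → ¬ G.Adj x y →
    M x y = 1 + (∑ i ∈ G.neighborFinset x, PB N G x i * M i y)
      + (∑ j ∈ G.neighborFinset y, PB N G y j * M x j)
      + (1 - PBsum N G x - PBsum N G y) * M x y) ∧
  (∀ x y, G.Adj x y →
    M x y = 1 + (∑ i ∈ (G.neighborFinset x).erase y, PB N G x i * M i y)
      + (∑ j ∈ (G.neighborFinset y).erase x, PB N G y j * M x j)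
      + (1 - PBsum N G x - PBsum N G y) * M x y)

/-!
`P^B` is symmetric and stochastic, so the uniform distribution `π` is stationary and
reversible, and `H(x,y) - H(π,y)` is symmetric in `x` and `y`, where
`H(π,y) = (1/N) ∑_z H(z,y)`. Hence
`g(x,y) = HG + (H(x,y) - H(π,y)) / 2` is a supersolution of the meeting-time equations of
the killed joint process (with defect `P^B_{xy} (g(x,x) + g(y,y) - g(x,y)) ≥ 0` on edges)
and is nonnegative on the diagonal. On a connected graph the maximum principle gives
`M ≤ g ≤ 3/2 · HG`, and `HG ≥ 1` because `N ≥ 2`.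
-/

section BiasedWalk

variable {N : ℕ} {G : SimpleGraph (Fin N)} [DecidableRel G.Adj]

theorem PB_of_adj {i j : Fin N} (h : G.Adj i j) :
    PB N G i j = 1 / (N : ℝ) * (1 / (G.degree i : ℝ) + 1 / (G.degree j : ℝ)) := by
  simp [PB, h]

theorem PB_of_not_adj_of_ne {i j : Fin N} (h : ¬ G.Adj i j) (hne : i ≠ j) : PB N G i j = 0 := by
  simp [PB, h, hne]

theorem PB_self (x : Fin N) : PB N G x x = 1 - PBsum N G x := by
  simp only [PB, SimpleGraph.irrefl, if_false, if_true, PBsum]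
  congr 1
  exact sum_congr rfl fun k hk => (PB_of_adj ((G.mem_neighborFinset x k).1 hk)).symm

theorem PB_comm (i j : Fin N) : PB N G i j = PB N G j i := by
  by_cases h : G.Adj i j
  · rw [PB_of_adj h, PB_of_adj h.symm, add_comm]
  · rcases eq_or_ne i j with rfl | hne
    · rfl
    · rw [PB_of_not_adj_of_ne h hne, PB_of_not_adj_of_ne (mt G.adj_symm h) hne.symm]

theorem PB_pos_of_adj {i j : Fin N} (h : G.Adj i j) : 0 < PB N G i j := by
  have hN : (0 : ℝ) < N := Nat.cast_pos.mpr i.pos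
  have hi : (0 : ℝ) < G.degree i := Nat.cast_pos.mpr ((G.degree_pos_iff_exists_adj i).2 ⟨j, h⟩)
  have hj : (0 : ℝ) < G.degree j := Nat.cast_pos.mpr ((G.degree_pos_iff_exists_adj j).2 ⟨i, h.symm⟩)
  rw [PB_of_adj h]
  positivity

theorem PBsum_le_one (x : Fin N) : PBsum N G x ≤ 1 := by
  have hN : (0 : ℝ) < N := Nat.cast_pos.mpr x.pos
  have hdeg : (G.degree x : ℝ) + 1 ≤ N := by
    exact_mod_cast Fintype.card_fin N ▸ G.degree_lt_card_verts x
  have hterm : ∀ k ∈ G.neighborFinset x,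
      PB N G x k ≤ 1 / (N : ℝ) * (1 / (G.degree x : ℝ) + 1) := fun k hk => by
    have hxk := (G.mem_neighborFinset x k).1 hk
    have hk : (1 : ℝ) ≤ G.degree k :=
      Nat.one_le_cast.mpr ((G.degree_pos_iff_exists_adj k).2 ⟨x, hxk.symm⟩)
    rw [PB_of_adj hxk]
    gcongr
    exact div_le_one_of_le₀ hk (by positivity)
  calc PBsum N G x ≤ ∑ _k ∈ G.neighborFinset x, 1 / (N : ℝ) * (1 / (G.degree x : ℝ) + 1) :=
        sum_le_sum hterm
    _ = ((G.degree x : ℝ) * (G.degree x : ℝ)⁻¹ + G.degree x) / N := by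
        rw [sum_const, G.card_neighborFinset_eq_degree, nsmul_eq_mul]; ring
    _ ≤ (1 + G.degree x) / N := by gcongr; exact mul_inv_le_one
    _ ≤ 1 := (div_le_one hN).2 (by linarith)

theorem PB_nonneg (i j : Fin N) : 0 ≤ PB N G i j := by
  by_cases h : G.Adj i j
  · exact (PB_pos_of_adj h).le
  · rcases eq_or_ne i j with rfl | hne
    · rw [PB_self]; linarith [PBsum_le_one (G := G) i]
    · rw [PB_of_not_adj_of_ne h hne]

theorem sum_PB_mul (x : Fin N) (f : Fin N → ℝ) :
    ∑ k, PB N G x k * f k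
      = (1 - PBsum N G x) * f x + ∑ k ∈ G.neighborFinset x, PB N G x k * f k := by
  have hx : x ∉ G.neighborFinset x := by simp
  have hzero : ∀ k ∈ univ, k ∉ insert x (G.neighborFinset x) → PB N G x k * f k = 0 :=
    fun k _ hk => by
      rw [mem_insert, not_or, G.mem_neighborFinset] at hk
      rw [PB_of_not_adj_of_ne hk.2 (Ne.symm hk.1), zero_mul]
  rw [← sum_subset (subset_univ _) hzero, sum_insert hx, PB_self]

theorem sum_PB (x : Fin N) : ∑ k, PB N G x k = 1 := by
  simpa [PBsum] using sum_PB_mul (G := G) x fun _ => 1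

end BiasedWalk

section HittingTime

variable {V : Type*} [Fintype V]

def IsHittingTimeOf (P H : V → V → ℝ) : Prop :=
  (∀ y, H y y = 0) ∧ ∀ x y, x ≠ y → H x y = 1 + ∑ k, P x k * H k y

theorem IsHittingTime.isHittingTimeOf {N : ℕ} {G : SimpleGraph (Fin N)} [DecidableRel G.Adj]
    {H : Fin N → Fin N → ℝ} (hH : IsHittingTime N G H) : IsHittingTimeOf (PB N G) H :=
  hH

namespace IsHittingTimeOf

variable {P H : V → V → ℝ}

theorem nonneg (hH : IsHittingTimeOf P H) (hP : ∀ x y, 0 ≤ P x y)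
    (hrow : ∀ x, ∑ y, P x y = 1) (x y : V) : 0 ≤ H x y := by
  obtain ⟨a, -, ha⟩ := exists_min_image univ (fun k => H k y) ⟨x, mem_univ x⟩
  refine le_trans ?_ (ha x (mem_univ x))
  by_contra! hneg
  have hay : a ≠ y := by rintro rfl; linarith [hH.1 a]
  have : H a y ≤ ∑ k, P a k * H k y :=
    calc H a y = ∑ k, P a k * H a y := by rw [← sum_mul, hrow, one_mul]
      _ ≤ ∑ k, P a k * H k y :=
        sum_le_sum fun k _ => mul_le_mul_of_nonneg_left (ha k (mem_univ k)) (hP a k)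
  linarith [hH.2 a y hay]

theorem one_le (hH : IsHittingTimeOf P H) (hP : ∀ x y, 0 ≤ P x y)
    (hrow : ∀ x, ∑ y, P x y = 1) {x y : V} (hxy : x ≠ y) : 1 ≤ H x y := by
  rw [hH.2 x y hxy]
  linarith [sum_nonneg fun k (_ : k ∈ univ) => mul_nonneg (hP x k) (hH.nonneg hP hrow k y)]

/-- For `z = y` this is Kac's formula: the uniform distribution is stationary, so the mean
return time to `y` is `card V`. -/
theorem sum_mul_eq [DecidableEq V] (hH : IsHittingTimeOf P H) (hsymm : ∀ x y, P x y = P y x)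
    (hrow : ∀ x, ∑ y, P x y = 1) (z y : V) :
    ∑ k, P z k * H k y = H z y - 1 + if z = y then (Fintype.card V : ℝ) else 0 := by
  have hcol : ∀ k, ∑ z, P z k = 1 := fun k => (sum_congr rfl fun z _ => hsymm z k).trans (hrow k)
  set D : V → ℝ := fun z => ∑ k, P z k * H k y - H z y + 1 with hD
  have hD_ne : ∀ z, z ≠ y → D z = 0 := fun z hz => by simp only [hD, hH.2 z y hz]; ring
  have hD_sum : ∑ z, D z = Fintype.card V := by
    simp only [hD, sum_add_distrib, sum_sub_distrib, sum_const, card_univ, nsmul_one]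
    rw [sum_comm]
    simp only [← sum_mul, hcol, one_mul, sub_self, zero_add]
  have hD_y : D y = Fintype.card V := by
    rw [← hD_sum, sum_eq_single y (fun z _ hz => hD_ne z hz) (by simp)]
  split_ifs with hzy
  · subst hzy
    simp only [hD] at hD_y
    linarith
  · have := hD_ne z hzy
    simp only [hD] at this
    linarith

theorem sub_mean_comm (hH : IsHittingTimeOf P H) (hsymm : ∀ x y, P x y = P y x)
    (hrow : ∀ x, ∑ y, P x y = 1) (x y : V) :
    H x y - (∑ z, H z y) / Fintype.card V = H y x - (∑ z, H z x) / Fintype.card V := by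
  classical
  have hexpand : ∀ a b, ∑ z, H z a * ∑ k, P z k * H k b
      = ∑ z, H z a * H z b - ∑ z, H z a + Fintype.card V * H b a := fun a b => by
    simp only [hH.sum_mul_eq hsymm hrow, mul_add, mul_sub, mul_one, mul_ite, mul_zero,
      sum_add_distrib, sum_sub_distrib, sum_ite_eq', mem_univ, if_true]
    ring
  have hswap : ∑ z, H z x * ∑ k, P z k * H k y = ∑ z, H z y * ∑ k, P z k * H k x := by
    simp only [mul_sum]
    rw [sum_comm]
    exact sum_congr rfl fun a _ => sum_congr rfl fun b _ => by rw [hsymm b a]; ring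
  have hprod : ∑ z, H z y * H z x = ∑ z, H z x * H z y := sum_congr rfl fun z _ => mul_comm _ _
  rw [hexpand, hexpand, hprod] at hswap
  have : Nonempty V := ⟨x⟩
  have hcard : (Fintype.card V : ℝ) ≠ 0 := Nat.cast_ne_zero.2 Fintype.card_ne_zero
  field_simp
  linarith

end IsHittingTimeOf

end HittingTime

section Meeting

variable {N : ℕ} {G : SimpleGraph (Fin N)} [DecidableRel G.Adj]

/-- Minus the generator of the joint process `X` killed when the walkers meet: `m` jumps to
some `i ≠ y`, `n` jumps to some `j ≠ x`, or the walkers swap along the edge `xy`. -/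
noncomputable def meetingGenerator (N : ℕ) (G : SimpleGraph (Fin N)) [DecidableRel G.Adj]
    (f : Fin N → Fin N → ℝ) (x y : Fin N) : ℝ :=
  ∑ i ∈ univ.erase y, PB N G x i * (f x y - f i y)
    + ∑ j ∈ univ.erase x, PB N G y j * (f x y - f x j) + PB N G x y * f x y

theorem meetingGenerator_sub (f g : Fin N → Fin N → ℝ) (x y : Fin N) :
    meetingGenerator N G (f - g) x y = meetingGenerator N G f x y - meetingGenerator N G g x y := by
  simp only [meetingGenerator, Pi.sub_apply, mul_sub, sum_sub_distrib]
  ring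

theorem sum_erase_PB_mul_sub (x y : Fin N) (F : Fin N → ℝ) :
    ∑ i ∈ univ.erase y, PB N G x i * (F x - F i)
      = PBsum N G x * F x - ∑ i ∈ G.neighborFinset x, PB N G x i * F i
        - PB N G x y * (F x - F y) := by
  rw [sum_erase_eq_sub (mem_univ y), sum_PB_mul]
  simp only [sub_self, mul_zero, zero_add, mul_sub, sum_sub_distrib, ← sum_mul, PBsum]

theorem IsMeetingTimeX.meetingGenerator_eq_one {M : Fin N → Fin N → ℝ}
    (hM : IsMeetingTimeX N G M) {x y : Fin N} (hxy : x ≠ y) :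
    meetingGenerator N G M x y = 1 := by
  obtain ⟨hdiag, hnonadj, hadj⟩ := hM
  have hbalance : (PBsum N G x + PBsum N G y - PB N G x y) * M x y
      = 1 + ∑ i ∈ G.neighborFinset x, PB N G x i * M i y
        + ∑ j ∈ G.neighborFinset y, PB N G y j * M x j := by
    by_cases h : G.Adj x y
    · have := hadj x y h
      rw [sum_erase _ (by rw [hdiag, mul_zero]), sum_erase _ (by rw [hdiag, mul_zero])] at this
      linarith
    · rw [PB_of_not_adj_of_ne h hxy]
      linarith [hnonadj x y hxy h]
  have hx := sum_erase_PB_mul_sub (G := G) x y (M · y)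
  have hy := sum_erase_PB_mul_sub (G := G) y x (M x ·)
  rw [hdiag] at hx hy
  rw [meetingGenerator, hx, hy, PB_comm y x]
  linarith

theorem IsMeetingTimeX.sub_eq_of_adj_of_isMax {M g : Fin N → Fin N → ℝ}
    (hM : IsMeetingTimeX N G M) (hg : ∀ x y, x ≠ y → 1 ≤ meetingGenerator N G g x y)
    {b c : Fin N} (hbc : b ≠ c) (hmax : ∀ p q, (M - g) p q ≤ (M - g) b c)
    (hpos : 0 < (M - g) b c) {i : Fin N} (hbi : G.Adj b i) :
    (M - g) i c = (M - g) b c := by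
  have hgen : meetingGenerator N G (M - g) b c ≤ 0 := by
    rw [meetingGenerator_sub, hM.meetingGenerator_eq_one hbc]
    linarith [hg b c hbc]
  have hA : ∀ k ∈ univ.erase c, 0 ≤ PB N G b k * ((M - g) b c - (M - g) k c) :=
    fun k _ => mul_nonneg (PB_nonneg b k) (sub_nonneg.2 (hmax k c))
  have hB : ∀ k ∈ univ.erase b, 0 ≤ PB N G c k * ((M - g) b c - (M - g) b k) :=
    fun k _ => mul_nonneg (PB_nonneg c k) (sub_nonneg.2 (hmax b k))
  have hC : 0 ≤ PB N G b c * (M - g) b c := mul_nonneg (PB_nonneg b c) hpos.le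
  rw [meetingGenerator] at hgen
  have hA0 : ∑ k ∈ univ.erase c, PB N G b k * ((M - g) b c - (M - g) k c) = 0 := by
    linarith [sum_nonneg hA, sum_nonneg hB]
  have hic : i ≠ c := by
    rintro rfl
    linarith [sum_nonneg hA, sum_nonneg hB, mul_pos (PB_pos_of_adj hbi) hpos]
  have hterm := (sum_eq_zero_iff_of_nonneg hA).1 hA0 i (mem_erase.2 ⟨hic, mem_univ i⟩)
  rcases mul_eq_zero.1 hterm with h | h
  · exact absurd h (PB_pos_of_adj hbi).ne'
  · linarith

theorem IsMeetingTimeX.le_of_one_le_meetingGenerator {M g : Fin N → Fin N → ℝ}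
    (hG : G.Connected) (hM : IsMeetingTimeX N G M) (hg_diag : ∀ x, 0 ≤ g x x)
    (hg : ∀ x y, x ≠ y → 1 ≤ meetingGenerator N G g x y) (x y : Fin N) : M x y ≤ g x y := by
  have : Nonempty (Fin N) := ⟨x⟩
  obtain ⟨⟨a, c⟩, hmax⟩ := Finite.exists_max fun p : Fin N × Fin N => (M - g) p.1 p.2
  suffices (M - g) a c ≤ 0 from sub_nonpos.1 ((hmax (x, y)).trans this)
  by_contra! hpos
  have hne : ∀ b, (M - g) b c = (M - g) a c → b ≠ c := by
    rintro b hb rfl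
    have : (M - g) b b ≤ 0 := by simp only [Pi.sub_apply, hM.1 b]; linarith [hg_diag b]
    linarith
  have hreach : ∀ b, Relation.ReflTransGen G.Adj a b → (M - g) b c = (M - g) a c := by
    intro b hab
    induction hab with
    | refl => rfl
    | tail _ hbi ih =>
      rw [← ih]
      exact hM.sub_eq_of_adj_of_isMax hg (hne _ ih) (fun p q => ih ▸ hmax (p, q))
        (ih ▸ hpos) hbi
  exact hne c (hreach c ((SimpleGraph.reachable_iff_reflTransGen a c).1 (hG.preconnected a c)))
    rfl

end Meeting

section Majorant

variable {N : ℕ} {G : SimpleGraph (Fin N)} [DecidableRel G.Adj] {H : Fin N → Fin N → ℝ} {HG : ℝ}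

noncomputable def meetingMajorant (N : ℕ) (H : Fin N → Fin N → ℝ) (HG : ℝ) (x y : Fin N) : ℝ :=
  HG + (H x y - (∑ z, H z y) / N) / 2

theorem mean_le_of_forall_le (hHG : ∀ a b, H a b ≤ HG) (y : Fin N) : (∑ z, H z y) / N ≤ HG := by
  have hN : (0 : ℝ) < N := Nat.cast_pos.mpr y.pos
  rw [div_le_iff₀ hN]
  calc ∑ z, H z y ≤ ∑ _z : Fin N, HG := sum_le_sum fun z _ => hHG z y
    _ = HG * N := by simp [mul_comm]

theorem meetingMajorant_comm (hH : IsHittingTimeOf (PB N G) H) (x y : Fin N) :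
    meetingMajorant N H HG x y = meetingMajorant N H HG y x := by
  have := hH.sub_mean_comm PB_comm sum_PB x y
  rw [Fintype.card_fin] at this
  rw [meetingMajorant, meetingMajorant, this]

theorem sum_PB_mul_sub_meetingMajorant (hH : IsHittingTimeOf (PB N G) H) {x y : Fin N}
    (hxy : x ≠ y) :
    ∑ i, PB N G x i * (meetingMajorant N H HG x y - meetingMajorant N H HG i y) = 1 / 2 := by
  calc ∑ i, PB N G x i * (meetingMajorant N H HG x y - meetingMajorant N H HG i y)
      = (∑ i, PB N G x i * H x y - ∑ i, PB N G x i * H i y) / 2 := by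
        rw [← sum_sub_distrib, sum_div]
        exact sum_congr rfl fun i _ => by rw [meetingMajorant, meetingMajorant]; ring
    _ = 1 / 2 := by rw [← sum_mul, sum_PB, hH.2 x y hxy]; ring

theorem meetingGenerator_meetingMajorant (hH : IsHittingTimeOf (PB N G) H) {x y : Fin N}
    (hxy : x ≠ y) :
    meetingGenerator N G (meetingMajorant N H HG) x y
      = 1 + PB N G x y * (meetingMajorant N H HG x x + meetingMajorant N H HG y y
          - meetingMajorant N H HG x y) := by
  have hy : ∑ j, PB N G y j * (meetingMajorant N H HG x y - meetingMajorant N H HG x j)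
      = 1 / 2 := by
    simpa only [meetingMajorant_comm hH x] using sum_PB_mul_sub_meetingMajorant hH hxy.symm
  rw [meetingGenerator, sum_erase_eq_sub (mem_univ y), sum_erase_eq_sub (mem_univ x),
    sum_PB_mul_sub_meetingMajorant hH hxy, hy, PB_comm y x]
  ring

theorem meetingMajorant_self_nonneg (hH : IsHittingTimeOf (PB N G) H)
    (hHG : ∀ a b, H a b ≤ HG) (x : Fin N) : 0 ≤ meetingMajorant N H HG x x := by
  rw [meetingMajorant, hH.1]
  linarith [mean_le_of_forall_le hHG x, hH.1 x ▸ hHG x x]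

theorem meetingMajorant_le_add (hH : IsHittingTimeOf (PB N G) H) (hHG : ∀ a b, H a b ≤ HG)
    (x y : Fin N) :
    meetingMajorant N H HG x y ≤ meetingMajorant N H HG x x + meetingMajorant N H HG y y := by
  simp only [meetingMajorant, hH.1]
  linarith [mean_le_of_forall_le hHG x, hHG x y]

theorem meetingMajorant_le (hH : IsHittingTimeOf (PB N G) H) (hHG : ∀ a b, H a b ≤ HG)
    (x y : Fin N) : meetingMajorant N H HG x y ≤ 3 / 2 * HG := by
  have hmean : 0 ≤ (∑ z, H z y) / N :=
    div_nonneg (sum_nonneg fun z _ => hH.nonneg PB_nonneg sum_PB z y) (Nat.cast_nonneg N)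
  rw [meetingMajorant]
  linarith [hHG x y]

theorem one_le_meetingGenerator_meetingMajorant (hH : IsHittingTimeOf (PB N G) H)
    (hHG : ∀ a b, H a b ≤ HG) {x y : Fin N} (hxy : x ≠ y) :
    1 ≤ meetingGenerator N G (meetingMajorant N H HG) x y := by
  rw [meetingGenerator_meetingMajorant hH hxy]
  exact le_add_of_nonneg_right
    (mul_nonneg (PB_nonneg x y) (sub_nonneg.2 (meetingMajorant_le_add hH hHG x y)))

end Majorant

/-- For two opposite strong opinions performing their joint dynamics `X`
on a connected graph `G`, the meeting time satisfies
`M_X(G) = max_{x,y} M_X(x,y) < 4·H_{P^B}(G)`, where `H_{P^B}(G)` is the maximum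
hitting time of the biased random walk. -/
theorem meeting_time_lt_four_hitting (N : ℕ) (hN : 2 ≤ N) (G : SimpleGraph (Fin N))
    [DecidableRel G.Adj] (hG : G.Connected) (H : Fin N → Fin N → ℝ)
    (hH : IsHittingTime N G H) (HG : ℝ)
    (hHG : IsGreatest {h : ℝ | ∃ a b : Fin N, h = H a b} HG)
    (M : Fin N → Fin N → ℝ) (hM : IsMeetingTimeX N G M) :
    ∀ x y : Fin N, M x y < 4 * HG := by
  intro x y
  have hHit := hH.isHittingTimeOf
  have hle : ∀ a b, H a b ≤ HG := fun a b => hHG.2 ⟨a, b, rfl⟩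
  have hHG_pos : 0 < HG := by
    have h01 : (⟨0, by omega⟩ : Fin N) ≠ ⟨1, by omega⟩ := by simp
    linarith [hHit.one_le PB_nonneg sum_PB h01, hle ⟨0, by omega⟩ ⟨1, by omega⟩]
  have hMg := hM.le_of_one_le_meetingGenerator hG (meetingMajorant_self_nonneg hHit hle)
    (fun _ _ => one_le_meetingGenerator_meetingMajorant hHit hle) x y
  linarith [meetingMajorant_le hHit hle x y]
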